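/- Let S be a finite monoid and A a finite set. For every F ⊆ SOp(A) and Q ⊆ SRel(A), one has SPol Q = SPol [Q]_S and SInv F = SInv ⟨F⟩_S, i.e., the Galois operators do not distinguish a set from the S-relational clone, respectively the S-preclone, it generates. -/

import Mathlib

namespace SPreclone

/-- An `S`-operation on `A`: an `(n+1)`-ary operation together with a signum
assigning an element of `S` to each argument. -/
structure SOp (S A : Type*) where
  n : ℕ
  fn : (Fin (n + 1) → A) → A
  sgn : Fin (n + 1) → S

/-- An `S`-relation on `A`: a family of `(m+1)`-ary relations indexed by `S`. -/
structure SRel (S A : Type*) where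
  m : ℕ
  rel : S → Set (Fin (m + 1) → A)

section

variable {S A : Type*} [Monoid S]

/-- `f` S-preserves `ρ`. -/
def SPreserves (f : SOp S A) (ρ : SRel S A) : Prop :=
  ∀ s : S, ∀ r : Fin (f.n + 1) → (Fin (ρ.m + 1) → A),
    (∀ i, r i ∈ ρ.rel (f.sgn i * s)) →
    (fun j => f.fn fun i => r i j) ∈ ρ.rel s

/-- `S`-polymorphisms of a set of `S`-relations. -/
def SPol (Q : Set (SRel S A)) : Set (SOp S A) := { f | ∀ ρ ∈ Q, SPreserves f ρ }

/-- Invariant `S`-relations of a set of `S`-operations. -/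
def SInv (F : Set (SOp S A)) : Set (SRel S A) := { ρ | ∀ f ∈ F, SPreserves f ρ }

/-- The identity operation, with signum `(e)`. -/
def idOp (S A : Type*) [Monoid S] : SOp S A := ⟨0, fun x => x 0, fun _ => 1⟩

/-- Cyclic shift `ζ` of the arguments (and the signa). -/
def cycOp (f : SOp S A) : SOp S A :=
  ⟨f.n, fun x => f.fn fun j => x (j + 1), fun i => f.sgn (i - 1)⟩

/-- Transposition `τ` of the first two arguments (and their signa). -/
def swapOp (f : SOp S A) : SOp S A :=
  ⟨f.n, fun x => f.fn fun j => x (Equiv.swap 0 1 j), fun i => f.sgn (Equiv.swap 0 1 i)⟩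

/-- `∇^s`: adding a fictitious first argument with signum `s`. -/
def nablaOp (s : S) (f : SOp S A) : SOp S A :=
  ⟨f.n + 1, fun x => f.fn fun j => x j.succ, Fin.cases (motive := fun _ => S) s f.sgn⟩

open Classical in
/-- `Δ`: identification of the first two arguments when they have the same signum
(otherwise, and for unary operations, `Δ f := f`). -/
noncomputable def deltaOp (f : SOp S A) : SOp S A :=
  match f with
  | ⟨0, fn, sgn⟩ => ⟨0, fn, sgn⟩
  | ⟨m + 1, fn, sgn⟩ =>
    if sgn 0 = sgn 1 then
      ⟨m, fun x => fn fun j => x ⟨j.val - 1, by have := j.isLt; omega⟩,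
        fun i => sgn i.succ⟩
    else ⟨m + 1, fn, sgn⟩

/-- Composition `(f ∘ g)(x₁,…,x_m,x_{m+1},…,x_{m+n-1}) = f(g(x₁,…,x_m),x_{m+1},…,x_{m+n-1})`,
with signum `(s'₁s₁, …, s'_m s₁, s₂, …, s_n)`. -/
def compOp (f g : SOp S A) : SOp S A :=
  ⟨g.n + f.n,
   fun x => f.fn fun k => Fin.cases (motive := fun _ => A)
     (g.fn fun i => x ⟨i.val, by have := i.isLt; omega⟩)
     (fun j => x ⟨g.n + 1 + j.val, by have := j.isLt; omega⟩) k,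
   fun i =>
     if h : i.val < g.n + 1 then g.sgn ⟨i.val, h⟩ * f.sgn 0
     else f.sgn ⟨i.val - g.n, by have := i.isLt; omega⟩⟩

/-- A set of `S`-operations is an `S`-preclone if it contains the identity and is closed
under `ζ`, `τ`, `∇^s`, `Δ` and composition. -/
def IsSPreclone (F : Set (SOp S A)) : Prop :=
  idOp S A ∈ F ∧
  (∀ f ∈ F, cycOp f ∈ F) ∧
  (∀ f ∈ F, swapOp f ∈ F) ∧
  (∀ (s : S), ∀ f ∈ F, nablaOp s f ∈ F) ∧
  (∀ f ∈ F, deltaOp f ∈ F) ∧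
  (∀ f ∈ F, ∀ g ∈ F, compOp f g ∈ F)

/-- The `S`-preclone generated by `F` (the least `S`-preclone containing `F`). -/
def SSg (F : Set (SOp S A)) : Set (SOp S A) := ⋂₀ { G | IsSPreclone G ∧ F ⊆ G }

/-- `δ^S := (Δ_A)_{s ∈ S}`. -/
def deltaS (S A : Type*) : SRel S A := ⟨1, fun _ => { a | a 0 = a 1 }⟩

/-- Componentwise cyclic shift of coordinates. -/
def cycRel (ρ : SRel S A) : SRel S A :=
  ⟨ρ.m, fun s => { b | (fun i => b (i - 1)) ∈ ρ.rel s }⟩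

/-- Componentwise transposition of the first two coordinates. -/
def swapRel (ρ : SRel S A) : SRel S A :=
  ⟨ρ.m, fun s => { b | (fun i => b (Equiv.swap 0 1 i)) ∈ ρ.rel s }⟩

/-- Componentwise deletion of the first coordinate (identity on unary relations). -/
def prRel (ρ : SRel S A) : SRel S A :=
  match ρ with
  | ⟨0, r⟩ => ⟨0, r⟩
  | ⟨m + 1, r⟩ => ⟨m, fun s => { b | ∃ a ∈ r s, b = fun j => a j.succ }⟩

/-- Componentwise Cartesian product. -/
def prodRel (ρ ρ' : SRel S A) : SRel S A :=
  ⟨ρ.m + ρ'.m + 1, fun s =>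
    { c | (fun i : Fin (ρ.m + 1) => c ⟨i.val, by have := i.isLt; omega⟩) ∈ ρ.rel s ∧
          (fun i : Fin (ρ'.m + 1) => c ⟨ρ.m + 1 + i.val, by have := i.isLt; omega⟩) ∈ ρ'.rel s }⟩

/-- Componentwise intersection; empty if the arities differ. -/
def interRel (ρ ρ' : SRel S A) : SRel S A :=
  if h : ρ.m = ρ'.m then
    ⟨ρ.m, fun s => { a | a ∈ ρ.rel s ∧
        (fun i : Fin (ρ'.m + 1) => a (Fin.cast (by omega) i)) ∈ ρ'.rel s }⟩
  else ⟨ρ.m, fun _ => ∅⟩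

/-- Index translation `μ_v(ρ) := (ρ_{sv})_{s ∈ S}`. -/
def muRel (v : S) (ρ : SRel S A) : SRel S A := ⟨ρ.m, fun s => ρ.rel (s * v)⟩

/-- `v`-self-intersection `(⊓^v ρ)_s := ⋂ { ρ_{s'} ∣ s'v = s }`
(an empty intersection being the full relation). -/
def selfInterRel (v : S) (ρ : SRel S A) : SRel S A :=
  ⟨ρ.m, fun s => { a | ∀ s' : S, s' * v = s → a ∈ ρ.rel s' }⟩

/-- A set of `S`-relations is an `S`-relational clone if it contains `δ^S` and is
closed under `ζ`, `τ`, `pr`, `×`, `∧`, `μ_v` and `⊓^v`. -/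
def IsSRelClone (Q : Set (SRel S A)) : Prop :=
  deltaS S A ∈ Q ∧
  (∀ ρ ∈ Q, cycRel ρ ∈ Q) ∧
  (∀ ρ ∈ Q, swapRel ρ ∈ Q) ∧
  (∀ ρ ∈ Q, prRel ρ ∈ Q) ∧
  (∀ ρ ∈ Q, ∀ ρ' ∈ Q, prodRel ρ ρ' ∈ Q) ∧
  (∀ ρ ∈ Q, ∀ ρ' ∈ Q, interRel ρ ρ' ∈ Q) ∧
  (∀ (v : S), ∀ ρ ∈ Q, muRel v ρ ∈ Q) ∧
  (∀ (v : S), ∀ ρ ∈ Q, selfInterRel v ρ ∈ Q)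

/-- The `S`-relational clone generated by `Q`. -/
def SRg (Q : Set (SRel S A)) : Set (SRel S A) := ⋂₀ { R | IsSRelClone R ∧ Q ⊆ R }

/-- `Γ_F(ρ)`: the least `S`-relation of the same arity containing `ρ` and invariant
for `F` (defined as the intersection of all such). -/
def Gamma (F : Set (SOp S A)) (ρ : SRel S A) : SRel S A :=
  ⟨ρ.m, fun s => ⋂ g ∈ { g : S → Set (Fin (ρ.m + 1) → A) |
      (⟨ρ.m, g⟩ : SRel S A) ∈ SInv F ∧ ∀ t, ρ.rel t ⊆ g t }, g s⟩

/-- Trivial `S`-operations (trivial projections): projections whose essential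
argument has signum `e`. -/
def SJ (S A : Type*) [Monoid S] : Set (SOp S A) :=
  { f | ∃ i : Fin (f.n + 1), f.sgn i = 1 ∧ ∀ x, f.fn x = x i }

/-- A diagonal relation: empty, or defined by an equivalence relation on the coordinates. -/
def IsDiagonal {A : Type*} {m : ℕ} (σ : Set (Fin m → A)) : Prop :=
  σ = ∅ ∨ ∃ ε : Fin m → Fin m → Prop, Equivalence ε ∧ σ = { a | ∀ i j, ε i j → a i = a j }

/-- `S`-diagonal `S`-relations. -/
def SD (S A : Type*) [Monoid S] : Set (SRel S A) :=
  { ρ | (∀ s, IsDiagonal (ρ.rel s)) ∧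
      ∀ s t : S, ({ x | ∃ u, x = u * s } : Set S) ⊆ { x | ∃ u, x = u * t } →
        ρ.rel s ⊆ ρ.rel t }

/-- Projection of an `S`-relation to the rows `z 0, …, z t` (componentwise). -/
def prMulti {t : ℕ} (ρ : SRel S A) (z : Fin (t + 1) → Fin (ρ.m + 1)) : SRel S A :=
  ⟨t, fun s => { b | ∃ a ∈ ρ.rel s, b = fun j => a (z j) }⟩

/-- One step of the inductive construction of `Γ_F(ρ)`:
`R s ∪ { f(r₁,…,r_n) ∣ f ∈ F, r_j ∈ R (sgn(f)_j * s) }`. -/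
def gammaStep (F : Set (SOp S A)) {m : ℕ}
    (R : S → Set (Fin (m + 1) → A)) : S → Set (Fin (m + 1) → A) :=
  fun s => R s ∪ { b | ∃ f ∈ F, ∃ r : Fin (f.n + 1) → (Fin (m + 1) → A),
    (∀ j, r j ∈ R (f.sgn j * s)) ∧ b = fun z => f.fn fun j => r j z }

/-- `χ` is (a presentation of) the `S`-relation `χ^λ`: its rows are enumerated by
*all* tuples of `A^n` via `e`, and its `s`-component consists exactly of the columns
`κ_i` with `λ i = s`. -/
def IsChi {n : ℕ} (lam : Fin n → S) (χ : SRel S A) : Prop :=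
  ∃ e : Fin (χ.m + 1) ≃ (Fin n → A),
    ∀ s, χ.rel s = { c | ∃ i, lam i = s ∧ c = fun z => e z i }

/-- `γ_Q(ρ)`: the least `S`-relation of the same arity containing `ρ` and belonging
to the `S`-relational clone generated by `Q` (defined as the intersection of all such). -/
def gammaQ (Q : Set (SRel S A)) (ρ : SRel S A) : SRel S A :=
  ⟨ρ.m, fun s => ⋂ g ∈ { g : S → Set (Fin (ρ.m + 1) → A) |
      (⟨ρ.m, g⟩ : SRel S A) ∈ SRg Q ∧ ∀ t, ρ.rel t ⊆ g t }, g s⟩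

/-- `π`-dual of an `S`-operation. -/
def opPi (π : Equiv.Perm A) (f : SOp S A) : SOp S A :=
  ⟨f.n, fun x => π (f.fn fun i => π.symm (x i)), f.sgn⟩

/-- `π`-dual of an `S`-relation. -/
def relPi (π : Equiv.Perm A) (ρ : SRel S A) : SRel S A :=
  ⟨ρ.m, fun s => { b | ∃ a ∈ ρ.rel s, b = fun i => π (a i) }⟩

/-- `h`-dual of an `S`-operation (only the signum changes). -/
def opH (h : S ≃* S) (f : SOp S A) : SOp S A :=
  ⟨f.n, f.fn, fun i => h (f.sgn i)⟩

/-- `h`-dual of an `S`-relation: `ρ^h := (ρ_{h⁻¹(s)})_{s ∈ S}`. -/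
def relH (h : S ≃* S) (ρ : SRel S A) : SRel S A :=
  ⟨ρ.m, fun s => ρ.rel (h.symm s)⟩

end

/-- An ordinary (unsigned) operation on `A`. -/
structure UOp (A : Type*) where
  n : ℕ
  fn : (Fin (n + 1) → A) → A

/-- An ordinary (unsigned) relation on `A`. -/
structure URel (A : Type*) where
  m : ℕ
  rel : Set (Fin (m + 1) → A)

/-- Ordinary preservation of a relation by an operation. -/
def UPreserves {A : Type*} (f : UOp A) (σ : URel A) : Prop :=
  ∀ r : Fin (f.n + 1) → (Fin (σ.m + 1) → A),
    (∀ i, r i ∈ σ.rel) → (fun j => f.fn fun i => r i j) ∈ σ.rel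

/-- Polymorphisms of a set of ordinary relations. -/
def UPol {A : Type*} (R : Set (URel A)) : Set (UOp A) := { f | ∀ σ ∈ R, UPreserves f σ }

/-- A clone: contains all projections and is closed under composition. -/
def IsClone {A : Type*} (C : Set (UOp A)) : Prop :=
  (∀ (n : ℕ) (i : Fin (n + 1)), (⟨n, fun x => x i⟩ : UOp A) ∈ C) ∧
  (∀ f ∈ C, ∀ (m : ℕ) (g : Fin (f.n + 1) → ((Fin (m + 1) → A) → A)),
    (∀ i, (⟨m, g i⟩ : UOp A) ∈ C) → (⟨m, fun x => f.fn fun i => g i x⟩ : UOp A) ∈ C)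

/-- The clone generated by a set of operations. -/
def CloneGen {A : Type*} (G : Set (UOp A)) : Set (UOp A) := ⋂₀ { C | IsClone C ∧ G ⊆ C }

/-! `SInv F` is always an `S`-relational clone and `SPol Q` always an `S`-preclone, since each
closure operation of either kind turns `S`-preserved relations (resp. `S`-preserving operations)
into such. Minimality then gives `[Q]_S ⊆ SInv (SPol Q)` and `⟨F⟩_S ⊆ SPol (SInv F)`, which are
the nontrivial inclusions; the others hold because `SPol` and `SInv` are antitone. -/

section Galois

variable {S A : Type*} [Monoid S]

theorem SPol_anti {Q Q' : Set (SRel S A)} (h : Q ⊆ Q') : SPol Q' ⊆ SPol Q :=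
  fun _ hf ρ hρ => hf ρ (h hρ)

theorem SInv_anti {F F' : Set (SOp S A)} (h : F ⊆ F') : SInv F' ⊆ SInv F :=
  fun _ hρ f hf => hρ f (h hf)

theorem subset_SInv_SPol (Q : Set (SRel S A)) : Q ⊆ SInv (SPol Q) :=
  fun ρ hρ _ hf => hf ρ hρ

theorem subset_SPol_SInv (F : Set (SOp S A)) : F ⊆ SPol (SInv F) :=
  fun f hf _ hρ => hρ f hf

theorem subset_SRg (Q : Set (SRel S A)) : Q ⊆ SRg Q :=
  fun _ hρ => Set.mem_sInter.2 fun _ hR => hR.2 hρ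

theorem SRg_subset {Q R : Set (SRel S A)} (hR : IsSRelClone R) (hQ : Q ⊆ R) : SRg Q ⊆ R :=
  Set.sInter_subset_of_mem ⟨hR, hQ⟩

theorem subset_SSg (F : Set (SOp S A)) : F ⊆ SSg F :=
  fun _ hf => Set.mem_sInter.2 fun _ hG => hG.2 hf

theorem SSg_subset {F G : Set (SOp S A)} (hG : IsSPreclone G) (hF : F ⊆ G) : SSg F ⊆ G :=
  Set.sInter_subset_of_mem ⟨hG, hF⟩

end Galois

namespace SPreserves

variable {S A : Type*} [Monoid S] {f g : SOp S A} {ρ ρ' : SRel S A}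

theorem deltaS (f : SOp S A) : SPreserves f (deltaS S A) :=
  fun _ _ hr => congrArg f.fn (funext hr)

theorem cycRel (h : SPreserves f ρ) : SPreserves f (cycRel ρ) :=
  fun s (r : Fin (f.n + 1) → Fin (ρ.m + 1) → A) hr => h s (fun i z => r i (z - 1)) hr

theorem swapRel (h : SPreserves f ρ) : SPreserves f (swapRel ρ) :=
  fun s (r : Fin (f.n + 1) → Fin (ρ.m + 1) → A) hr =>
    h s (fun i z => r i (Equiv.swap 0 1 z)) hr

theorem prRel (h : SPreserves f ρ) : SPreserves f (prRel ρ) := by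
  obtain ⟨_ | m, R⟩ := ρ
  · exact h
  · intro s r hr
    choose a ha hra using hr
    refine ⟨fun z => f.fn fun i => a i z, h s a ha, ?_⟩
    ext j
    exact congrArg f.fn (funext fun i => congrFun (hra i) j)

theorem prodRel (h : SPreserves f ρ) (h' : SPreserves f ρ') :
    SPreserves f (prodRel ρ ρ') :=
  fun s _ hr => ⟨h s _ fun i => (hr i).1, h' s _ fun i => (hr i).2⟩

theorem interRel (h : SPreserves f ρ) (h' : SPreserves f ρ') :
    SPreserves f (interRel ρ ρ') := by
  obtain ⟨m, R⟩ := ρ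
  obtain ⟨m', R'⟩ := ρ'
  by_cases hm : m = m'
  · subst hm
    simp only [SPreclone.interRel]
    exact fun s r hr => ⟨h s r fun i => (hr i).1, h' s _ fun i => (hr i).2⟩
  · simp only [SPreclone.interRel, dif_neg hm]
    exact fun _ _ hr => absurd (hr 0) (Set.notMem_empty _)

theorem muRel (v : S) (h : SPreserves f ρ) : SPreserves f (muRel v ρ) :=
  fun s r hr => h (s * v) r fun i => mul_assoc (f.sgn i) s v ▸ hr i

theorem selfInterRel (v : S) (h : SPreserves f ρ) : SPreserves f (selfInterRel v ρ) :=
  fun _ r hr s' hs' => h s' r fun i => hr i _ (by rw [mul_assoc, hs'])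

theorem idOp (ρ : SRel S A) : SPreserves (idOp S A) ρ := by
  simp only [SPreserves, SPreclone.idOp, one_mul]
  exact fun s r hr => hr 0

theorem cycOp (h : SPreserves f ρ) : SPreserves (cycOp f) ρ := by
  simp only [SPreserves, SPreclone.cycOp]
  exact fun s r hr => h s (fun j => r (j + 1)) fun j => by simpa using hr (j + 1)

theorem swapOp (h : SPreserves f ρ) : SPreserves (swapOp f) ρ := by
  simp only [SPreserves, SPreclone.swapOp]
  exact fun s r hr => h s (fun j => r (Equiv.swap 0 1 j)) fun j => by
    simpa using hr (Equiv.swap 0 1 j)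

theorem nablaOp (t : S) (h : SPreserves f ρ) : SPreserves (nablaOp t f) ρ := by
  simp only [SPreserves, SPreclone.nablaOp]
  exact fun s r hr => h s (fun j => r j.succ) fun j => by simpa using hr j.succ

theorem deltaOp (h : SPreserves f ρ) : SPreserves (deltaOp f) ρ := by
  obtain ⟨_ | m, fn, sgn⟩ := f
  · exact h
  by_cases hsgn : sgn 0 = sgn 1
  · dsimp only [SPreclone.deltaOp]
    rw [if_pos hsgn]
    dsimp only [SPreserves] at h ⊢
    intro s r hr
    refine h s (fun j => r ⟨j.val - 1, by omega⟩) fun j => ?_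
    cases j using Fin.cases with
    | zero => exact hsgn ▸ hr 0
    | succ k => exact hr k
  · dsimp only [SPreclone.deltaOp]
    rwa [if_neg hsgn]

theorem compOp (hf : SPreserves f ρ) (hg : SPreserves g ρ) : SPreserves (compOp f g) ρ := by
  obtain ⟨n, fn, fsgn⟩ := f
  obtain ⟨k, gn, gsgn⟩ := g
  simp only [SPreserves, SPreclone.compOp] at hf hg ⊢
  intro s r hr
  have hinner : (fun z => gn fun i : Fin (k + 1) => r ⟨i.val, by omega⟩ z) ∈ ρ.rel (fsgn 0 * s) :=
    hg _ _ fun i => by simpa [mul_assoc, Fin.is_le] using hr ⟨i.val, by omega⟩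
  convert hf s (Fin.cases _ fun j : Fin n => r ⟨k + 1 + j.val, by omega⟩) fun i => ?_ using 1
  · ext z
    congr 1
    ext i
    cases i using Fin.cases <;> rfl
  · cases i using Fin.cases with
    | zero => exact hinner
    | succ j =>
      have hj := hr ⟨k + 1 + j.val, by omega⟩
      simp only [add_lt_iff_neg_left, not_lt_zero, dite_false] at hj
      have hidx : (⟨k + 1 + j.val - k, by omega⟩ : Fin (n + 1)) = j.succ :=
        Fin.ext (by simp only [Fin.val_succ]; omega)
      rw [hidx] at hj
      exact hj

end SPreserves

section Closure

variable {S A : Type*} [Monoid S]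

theorem isSRelClone_SInv (F : Set (SOp S A)) : IsSRelClone (SInv F) :=
  ⟨fun f _ => .deltaS f,
   fun _ hρ f hf => (hρ f hf).cycRel,
   fun _ hρ f hf => (hρ f hf).swapRel,
   fun _ hρ f hf => (hρ f hf).prRel,
   fun _ hρ _ hρ' f hf => (hρ f hf).prodRel (hρ' f hf),
   fun _ hρ _ hρ' f hf => (hρ f hf).interRel (hρ' f hf),
   fun v _ hρ f hf => (hρ f hf).muRel v,
   fun v _ hρ f hf => (hρ f hf).selfInterRel v⟩

theorem isSPreclone_SPol (Q : Set (SRel S A)) : IsSPreclone (SPol Q) :=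
  ⟨fun ρ _ => .idOp ρ,
   fun _ hf ρ hρ => (hf ρ hρ).cycOp,
   fun _ hf ρ hρ => (hf ρ hρ).swapOp,
   fun t _ hf ρ hρ => (hf ρ hρ).nablaOp t,
   fun _ hf ρ hρ => (hf ρ hρ).deltaOp,
   fun _ hf _ hg ρ hρ => (hf ρ hρ).compOp (hg ρ hρ)⟩

theorem SPol_SRg (Q : Set (SRel S A)) : SPol (SRg Q) = SPol Q :=
  (SPol_anti (subset_SRg Q)).antisymm fun f hf _ hρ =>
    SRg_subset (isSRelClone_SInv _) (subset_SInv_SPol Q) hρ f hf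

theorem SInv_SSg (F : Set (SOp S A)) : SInv (SSg F) = SInv F :=
  (SInv_anti (subset_SSg F)).antisymm fun ρ hρ _ hf =>
    SSg_subset (isSPreclone_SPol _) (subset_SPol_SInv F) hf ρ hρ

end Closure

theorem SPol_SRg_and_SInv_SSg_general {S A : Type*} [Monoid S]
    (F : Set (SOp S A)) (Q : Set (SRel S A)) :
    SPol Q = SPol (SRg Q) ∧ SInv F = SInv (SSg F) :=
  ⟨(SPol_SRg Q).symm, (SInv_SSg F).symm⟩

/-- The Galois operators do not distinguish a set from the `S`-relational clone,
respectively the `S`-preclone, it generates: `SPol Q = SPol [Q]_S` and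
`SInv F = SInv ⟨F⟩_S`. -/
theorem SPol_SRg_and_SInv_SSg {S A : Type*} [Monoid S] [Fintype S] [Fintype A]
    (F : Set (SOp S A)) (Q : Set (SRel S A)) :
    SPol Q = SPol (SRg Q) ∧ SInv F = SInv (SSg F) :=
  SPol_SRg_and_SInv_SSg_general F Q

end SPreclone
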